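/- arXiv:math/0502523 — 4 statements merged into one kernel-verified Lean document; each statement's English description precedes it below -/
import Mathlib

section
/- Let Φ be an irreducible root system with basis Δ, largest root α_M, extended basis Δ' = Δ ∪ {−α_M}, and Coxeter number h(Φ). Then every root α ∈ Φ can be written as a linear combination with nonnegative integer coefficients of elements of Δ', and there is a unique such combination in which the sum of the coefficients is strictly smaller than h(Φ). -/
open Finset

/-- A based, irreducible, reduced root system in a Euclidean space, together with
coordinate data with respect to the base `Δ`, the highest root, and the
extended base `Δ' = Δ ∪ {-highest}`. -/
structure BasedRootSystem (V : Type*) [NormedAddCommGroup V] [InnerProductSpace ℝ V] where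
  Φ : Finset V
  zero_not_mem : (0 : V) ∉ Φ
  neg_mem : ∀ α ∈ Φ, -α ∈ Φ
  reduced : ∀ α ∈ Φ, ∀ c : ℝ, c • α ∈ Φ → c = 1 ∨ c = -1
  crystallographic : ∀ α ∈ Φ, ∀ β ∈ Φ, ∃ n : ℤ,
    2 * (inner ℝ α β : ℝ) / (inner ℝ α α : ℝ) = (n : ℝ)
  reflect_mem : ∀ α ∈ Φ, ∀ β ∈ Φ, β - (2 * (inner ℝ β α : ℝ) / (inner ℝ α α : ℝ)) • α ∈ Φ
  Δ : Finset V
  base_sub : Δ ⊆ Φ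
  indep : LinearIndependent ℝ (fun γ : Δ => (γ : V))
  coord : V → V → ℤ
  coord_zero : ∀ γ : V, coord 0 γ = 0
  coord_spec : ∀ α ∈ Φ, α = ∑ γ ∈ Δ, (coord α γ : ℝ) • γ
  coord_sign : ∀ α ∈ Φ, (∀ γ ∈ Δ, 0 ≤ coord α γ) ∨ (∀ γ ∈ Δ, coord α γ ≤ 0)
  highest : V
  highest_mem : highest ∈ Φ
  highest_pos : ∀ γ ∈ Δ, 1 ≤ coord highest γ
  highest_is_highest : ∀ α ∈ Φ, ∀ γ ∈ Δ, coord α γ ≤ coord highest γ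

namespace BasedRootSystem

variable {V : Type*} [NormedAddCommGroup V] [InnerProductSpace ℝ V] (B : BasedRootSystem V)

/-- `α` is positive relative to the base `Δ`. -/
def IsPos (α : V) : Prop := ∀ γ ∈ B.Δ, 0 ≤ B.coord α γ

/-- `ε_α` : `0` if `α` is positive, `1` otherwise. -/
noncomputable def eps (α : V) : ℤ := by
  classical exact if B.IsPos α then 0 else 1

/-- The extended base `Δ' = Δ ∪ {-α_M}`. -/
noncomputable def extBase : Finset V := by
  classical exact insert (-B.highest) B.Δ

/-- The Coxeter number: one plus the height of the highest root. -/
def cox : ℤ := (∑ γ ∈ B.Δ, B.coord B.highest γ) + 1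

/-- Coefficientwise order on affine roots `(α, n)`, via their decomposition in the
affine basis `Δ_aff`. -/
def affLe (p q : V × ℤ) : Prop :=
  p.2 ≤ q.2 ∧ ∀ γ ∈ B.Δ,
    B.coord p.1 γ + p.2 * B.coord B.highest γ ≤ B.coord q.1 γ + q.2 * B.coord B.highest γ

/-- The partial order on `Φ` induced from the affine root system:
`α ≤ β` iff `(α, v + ε_α) ≤ (β, v + ε_β)` coefficientwise for every `v`. -/
def rle (α β : V) : Prop := B.affLe (α, B.eps α) (β, B.eps β)

/-- `c` is a decomposition of `α` as a nonnegative integral combination of the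
extended base `Δ'`. -/
def IsDecomp (α : V) (c : V → ℕ) : Prop :=
  α = ∑ γ ∈ B.extBase, (c γ : ℝ) • γ

/-- The sum of the coefficients of a decomposition in `Δ'`. -/
noncomputable def decompSum (c : V → ℕ) : ℤ := ∑ γ ∈ B.extBase, (c γ : ℤ)

/-- A subset of `Φ` is `Δ'`-complete if it is downward closed for the order `rle`. -/
def Complete (Ψ : Set V) : Prop :=
  ∀ α ∈ Ψ, ∀ β ∈ B.Φ, B.rle β α → β ∈ Ψ

/-- The set of ratios `(Σ ε_{α_i})/t` over nonempty zero-sum families in `X`. -/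
noncomputable def ratioSet (X : Set V) : Set ℝ :=
  {q | ∃ (t : ℕ) (a : Fin t → V), 0 < t ∧ (∀ i, a i ∈ X) ∧ (∑ i, a i) = 0 ∧
        q = (∑ i, (B.eps (a i) : ℝ)) / (t : ℝ)}

end BasedRootSystem

/-!
Fix a root `α` and a decomposition `c` of it in `Δ' = Δ ∪ {-α_M}`, and put `m = c(-α_M)`.
Comparing `Δ`-coordinates, the remaining coefficients are forced to be those of `α + m α_M`,
so the coefficient sum is `m h + ht α`, where `h` is the Coxeter number. As `m` runs over `ℕ`
these sums form an arithmetic progression of step `h`, so at most one of them lies in `[0, h)`.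
The choice `m = ε_α` is admissible and lands there: for `α < 0` the coordinates of `α + α_M`
are nonnegative because `-α ≤ α_M` coefficientwise, and `ht α < 0 < h + ht α`.
-/

lemma le_of_mul_add_lt_of_nonneg {h s m₁ m₂ : ℤ} (hh : 0 < h) (h₁ : m₁ * h + s < h)
    (h₂ : 0 ≤ m₂ * h + s) : m₁ ≤ m₂ := by
  have : m₁ * h < (m₂ + 1) * h := by linarith
  have := lt_of_mul_lt_mul_right this hh.le
  omega

namespace BasedRootSystem

variable {V : Type*} [NormedAddCommGroup V] [InnerProductSpace ℝ V] (B : BasedRootSystem V)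

def height (α : V) : ℤ := ∑ γ ∈ B.Δ, B.coord α γ

lemma cox_eq_height_add_one : B.cox = B.height B.highest + 1 := rfl

lemma eq_of_sum_smul_base_eq {f g : V → ℝ}
    (h : ∑ γ ∈ B.Δ, f γ • γ = ∑ γ ∈ B.Δ, g γ • γ) : ∀ γ ∈ B.Δ, f γ = g γ := by
  have hzero : ∑ γ ∈ B.Δ, (f γ - g γ) • γ = 0 := by
    simp only [sub_smul, Finset.sum_sub_distrib, h, sub_self]
  exact fun γ hγ => sub_eq_zero.mp ((linearIndepOn_finset_iff (v := id)).mp B.indep _ hzero γ hγ)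

lemma coord_neg {α : V} (hα : α ∈ B.Φ) {γ : V} (hγ : γ ∈ B.Δ) :
    B.coord (-α) γ = -B.coord α γ := by
  have hsum : ∑ γ ∈ B.Δ, (B.coord (-α) γ : ℝ) • γ = ∑ γ ∈ B.Δ, (-(B.coord α γ : ℝ)) • γ := by
    simp only [neg_smul, Finset.sum_neg_distrib, ← B.coord_spec α hα,
      ← B.coord_spec _ (B.neg_mem α hα)]
  exact_mod_cast B.eq_of_sum_smul_base_eq hsum γ hγ

lemma coord_self {δ : V} (hδ : δ ∈ B.Δ) : B.coord δ δ = 1 := by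
  classical
  have hsum : ∑ γ ∈ B.Δ, (B.coord δ γ : ℝ) • γ = ∑ γ ∈ B.Δ, (if γ = δ then (1 : ℝ) else 0) • γ := by
    rw [← B.coord_spec δ (B.base_sub hδ)]
    simp [hδ]
  simpa [hδ] using B.eq_of_sum_smul_base_eq hsum δ hδ

lemma neg_highest_notMem_base : -B.highest ∉ B.Δ := fun h => by
  have hneg := B.coord_neg B.highest_mem h
  have hpos := B.highest_pos _ h
  rw [B.coord_self h] at hneg
  omega

lemma sum_extBase {M : Type*} [AddCommMonoid M] (f : V → M) :
    ∑ γ ∈ B.extBase, f γ = f (-B.highest) + ∑ γ ∈ B.Δ, f γ := by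
  classical
  exact Finset.sum_insert B.neg_highest_notMem_base

lemma isDecomp_iff {α : V} (hα : α ∈ B.Φ) (c : V → ℕ) :
    B.IsDecomp α c ↔
      ∀ γ ∈ B.Δ, (c γ : ℤ) = B.coord α γ + c (-B.highest) * B.coord B.highest γ := by
  have hsum : (c (-B.highest) : ℝ) • B.highest + α =
      ∑ γ ∈ B.Δ, ((B.coord α γ : ℝ) + c (-B.highest) * B.coord B.highest γ) • γ := by
    simp only [add_smul, mul_smul, Finset.sum_add_distrib, ← Finset.smul_sum,
      ← B.coord_spec α hα, ← B.coord_spec _ B.highest_mem, add_comm]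
  rw [IsDecomp, sum_extBase, smul_neg, ← sub_eq_neg_add, eq_sub_iff_add_eq', eq_comm, hsum]
  constructor
  · intro h γ hγ
    exact_mod_cast B.eq_of_sum_smul_base_eq h γ hγ
  · intro h
    refine Finset.sum_congr rfl fun γ hγ => ?_
    have hγ' : (c γ : ℝ) = B.coord α γ + c (-B.highest) * B.coord B.highest γ := by
      exact_mod_cast h γ hγ
    rw [hγ']

lemma decompSum_eq {α : V} (hα : α ∈ B.Φ) {c : V → ℕ} (hc : B.IsDecomp α c) :
    B.decompSum c = c (-B.highest) * B.cox + B.height α := by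
  rw [decompSum, sum_extBase, Finset.sum_congr rfl ((B.isDecomp_iff hα c).mp hc),
    Finset.sum_add_distrib, ← Finset.mul_sum, cox_eq_height_add_one, height, height]
  ring

lemma decompSum_nonneg (c : V → ℕ) : 0 ≤ B.decompSum c :=
  Finset.sum_nonneg fun _ _ => Int.natCast_nonneg _

lemma exists_isDecomp_of_coord_nonneg {α : V} (hα : α ∈ B.Φ) (m : ℕ)
    (hm : ∀ γ ∈ B.Δ, 0 ≤ B.coord α γ + m * B.coord B.highest γ) :
    ∃ c, B.IsDecomp α c ∧ c (-B.highest) = m := by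
  classical
  let c : V → ℕ := fun γ =>
    if γ = -B.highest then m else (B.coord α γ + m * B.coord B.highest γ).toNat
  refine ⟨c, (B.isDecomp_iff hα c).mpr fun γ hγ => ?_, if_pos rfl⟩
  have hne : γ ≠ -B.highest := fun h => B.neg_highest_notMem_base (h ▸ hγ)
  simp [c, hne, Int.toNat_of_nonneg (hm γ hγ)]

lemma height_le_height_highest {α : V} (hα : α ∈ B.Φ) : B.height α ≤ B.height B.highest :=
  Finset.sum_le_sum fun γ hγ => B.highest_is_highest α hα γ hγ

lemma height_neg_of_not_isPos {α : V} (hα : α ∈ B.Φ) (hpos : ¬B.IsPos α) : B.height α < 0 := by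
  obtain ⟨γ₀, hγ₀, hlt⟩ : ∃ γ ∈ B.Δ, B.coord α γ < 0 := by simpa [IsPos] using hpos
  have hnonpos : ∀ γ ∈ B.Δ, B.coord α γ ≤ 0 := (B.coord_sign α hα).resolve_left hpos
  simpa [height] using Finset.sum_lt_sum hnonpos ⟨γ₀, hγ₀, hlt⟩

lemma exists_isDecomp_decompSum_lt {α : V} (hα : α ∈ B.Φ) :
    ∃ c, B.IsDecomp α c ∧ B.decompSum c < B.cox := by
  by_cases hpos : B.IsPos α
  · obtain ⟨c, hc, hm⟩ := B.exists_isDecomp_of_coord_nonneg hα 0 (by simpa [IsPos] using hpos)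
    refine ⟨c, hc, ?_⟩
    rw [B.decompSum_eq hα hc, hm, cox_eq_height_add_one]
    push_cast
    linarith [B.height_le_height_highest hα]
  · have hnonneg : ∀ γ ∈ B.Δ, 0 ≤ B.coord α γ + B.coord B.highest γ := fun γ hγ => by
      have := B.highest_is_highest _ (B.neg_mem α hα) γ hγ
      rw [B.coord_neg hα hγ] at this
      omega
    obtain ⟨c, hc, hm⟩ := B.exists_isDecomp_of_coord_nonneg hα 1 (by simpa using hnonneg)
    refine ⟨c, hc, ?_⟩
    rw [B.decompSum_eq hα hc, hm]
    push_cast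
    linarith [B.height_neg_of_not_isPos hα hpos]

lemma isDecomp_unique {α : V} (hα : α ∈ B.Φ) {c₁ c₂ : V → ℕ}
    (hc₁ : B.IsDecomp α c₁) (hs₁ : B.decompSum c₁ < B.cox)
    (hc₂ : B.IsDecomp α c₂) (hs₂ : B.decompSum c₂ < B.cox) :
    ∀ γ ∈ B.extBase, c₁ γ = c₂ γ := by
  classical
  have hcox : 0 < B.cox := (B.decompSum_nonneg c₁).trans_lt hs₁
  have e₁ := B.decompSum_eq hα hc₁
  have e₂ := B.decompSum_eq hα hc₂
  have hm : (c₁ (-B.highest) : ℤ) = c₂ (-B.highest) := le_antisymm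
    (le_of_mul_add_lt_of_nonneg hcox (e₁ ▸ hs₁) (e₂ ▸ B.decompSum_nonneg c₂))
    (le_of_mul_add_lt_of_nonneg hcox (e₂ ▸ hs₂) (e₁ ▸ B.decompSum_nonneg c₁))
  intro γ hγ
  rcases Finset.mem_insert.mp hγ with rfl | hγ
  · exact_mod_cast hm
  · have h₁ := (B.isDecomp_iff hα c₁).mp hc₁ γ hγ
    have h₂ := (B.isDecomp_iff hα c₂).mp hc₂ γ hγ
    rw [hm] at h₁
    exact_mod_cast h₁.trans h₂.symm

end BasedRootSystem

/-- every root is a nonnegative integral combination of the extended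
base `Δ'`, and there is a unique such combination whose coefficient sum is
strictly smaller than the Coxeter number. -/
theorem stmt0 {V : Type*} [NormedAddCommGroup V] [InnerProductSpace ℝ V]
    (B : BasedRootSystem V) :
    ∀ α ∈ B.Φ,
      (∃ c : V → ℕ, B.IsDecomp α c ∧ B.decompSum c < B.cox) ∧
      ∀ c₁ c₂ : V → ℕ, B.IsDecomp α c₁ → B.decompSum c₁ < B.cox →
        B.IsDecomp α c₂ → B.decompSum c₂ < B.cox →
        ∀ γ ∈ B.extBase, c₁ γ = c₂ γ := fun _ hα =>
  ⟨B.exists_isDecomp_decompSum_lt hα, fun _ _ => B.isDecomp_unique hα⟩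
end

section
/- Let Φ be an irreducible root system and let (α_1, c_1+ε_{α_1}), …, (α_t, c_t+ε_{α_t}) be positive affine roots whose sum is a positive affine root (α, c+ε_α). Let β ∈ Φ ∪ {0} and c' ∈ {c, c+1} be such that (α, c+ε_α) ≤ (β, c'+ε_β) ≤ (0, c+1) in the coefficientwise partial order. Then there exist elements (β_1, c'_1+ε_{β_1}), …, (β_t, c'_t+ε_{β_t}) of the extended positive affine roots (Φ∪{0}) × ℤ whose sum is (β, c'+ε_β) and such that (α_i, c_i+ε_{α_i}) ≤ (β_i, c'_i+ε_{β_i}) ≤ (0, c_i+1) for every i. -/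
/-!
Shifting levels by `-c`, everything takes place among the rigid affine roots: `(x, ε_x)` for
`x ∈ Φ`, and `δ = (0, 1)`. Two rigid roots `bot ≤ top` are joined by a chain of rigid roots in
which consecutive members differ by an affine simple root, `(γ, 0)` with `γ ∈ Δ` or
`α₀ = (-θ, 1)`: writing `top - bot` as a nonnegative combination of affine simple roots, some `s`
occurring in it pairs positively with `top.1 - bot.1`, so by root strings `bot + s` or `top - s`
is again rigid and lies between them.

The family `(α_i, ε_{α_i})` is pushed up this chain one simple root at a time. This needs: if `τ`
and `τ + s` are rigid and rigid roots `q_i` sum to `τ`, then some `q_i + s` is rigid. For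
`s = α₀`, otherwise every `q_i` pairs nonpositively with `θ`, which is impossible since
`2⟪θ, x⟫ ≤ ⟪θ, θ⟫` for every root `x ≠ θ`. For `s = (γ, 0)` it is an induction on the number of
summands: if `r = ∑ q_i` and `r + γ` are roots but no `q_i + γ` is a root or zero, the pairing
`⟪r, r + γ⟫ > 0` singles out a summand `q_i` for which `r - q_i` and `r - q_i + γ` are roots.
-/

open Finset

open scoped RealInnerProductSpace

theorem exists_pos_coeff_and_inner_pos {E ι : Type*} [NormedAddCommGroup E]
    [InnerProductSpace ℝ E] {v u : E} {s : Finset ι} {f : ι → E} {d₀ : ℝ} {d : ι → ℝ}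
    (hd₀ : 0 ≤ d₀) (hd : ∀ i ∈ s, 0 ≤ d i) (hv : v = d₀ • u + ∑ i ∈ s, d i • f i)
    (hv₀ : v ≠ 0) :
    (0 < d₀ ∧ 0 < ⟪v, u⟫) ∨ ∃ i ∈ s, 0 < d i ∧ 0 < ⟪v, f i⟫ := by
  have hvv : ⟪v, v⟫ = d₀ * ⟪v, u⟫ + ∑ i ∈ s, d i * ⟪v, f i⟫ := by
    conv_lhs => arg 3; rw [hv]
    simp only [inner_add_right, inner_sum, real_inner_smul_right]
  have hpos : 0 < d₀ * ⟪v, u⟫ + ∑ i ∈ s, d i * ⟪v, f i⟫ :=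
    hvv ▸ real_inner_self_pos.2 hv₀
  rcases lt_or_ge 0 (d₀ * ⟪v, u⟫) with h | h
  · exact .inl (pos_and_pos_or_neg_and_neg_of_mul_pos h |>.resolve_right
      fun h' => h'.1.not_ge hd₀)
  · obtain ⟨i, hi, h⟩ := Finset.exists_lt_of_sum_lt (f := fun _ => (0 : ℝ))
      (g := fun i => d i * ⟪v, f i⟫) (by rw [Finset.sum_const_zero]; linarith)
    exact .inr ⟨i, hi, pos_and_pos_or_neg_and_neg_of_mul_pos h |>.resolve_right
      fun h' => h'.1.not_ge (hd i hi)⟩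

namespace BasedRootSystem

open scoped Classical

variable {V : Type*} [NormedAddCommGroup V] [InnerProductSpace ℝ V] {B : BasedRootSystem V}

variable (B) in
def Φ₀ : Set V := (B.Φ : Set V) ∪ {0}

lemma mem_Φ₀ {x : V} : x ∈ B.Φ₀ ↔ x ∈ B.Φ ∨ x = 0 := by simp [Φ₀, or_comm]

lemma mem_Φ₀_of_mem {x : V} (hx : x ∈ B.Φ) : x ∈ B.Φ₀ := mem_Φ₀.2 (.inl hx)

lemma zero_mem_Φ₀ : (0 : V) ∈ B.Φ₀ := mem_Φ₀.2 (.inr rfl)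

lemma neg_mem_Φ₀ {x : V} (hx : x ∈ B.Φ₀) : -x ∈ B.Φ₀ := by
  rcases mem_Φ₀.1 hx with hx | rfl
  · exact mem_Φ₀_of_mem (B.neg_mem x hx)
  · simpa using hx

lemma ne_zero_of_mem {x : V} (hx : x ∈ B.Φ) : x ≠ 0 := by
  rintro rfl
  exact B.zero_not_mem hx

lemma eq_sum_coord {x : V} (hx : x ∈ B.Φ₀) : x = ∑ γ ∈ B.Δ, (B.coord x γ : ℝ) • γ := by
  rcases mem_Φ₀.1 hx with hx | rfl
  · exact B.coord_spec x hx
  · simp [B.coord_zero]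

lemma coord_eq_of_eq_sum {x : V} (hx : x ∈ B.Φ₀) {n : V → ℤ}
    (h : x = ∑ γ ∈ B.Δ, (n γ : ℝ) • γ) : ∀ γ ∈ B.Δ, B.coord x γ = n γ := by
  have hli : LinearIndepOn ℝ id (B.Δ : Set V) := B.indep
  intro γ hγ
  have := linearIndepOn_finset_iff.1 hli (fun δ => ((B.coord x δ - n δ : ℤ) : ℝ))
    (by simp only [Int.cast_sub, sub_smul, Finset.sum_sub_distrib, id, ← h, ← eq_sum_coord hx,
      sub_self]) γ hγ
  exact sub_eq_zero.1 (by exact_mod_cast this)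

lemma coord_inj {x y : V} (hx : x ∈ B.Φ₀) (hy : y ∈ B.Φ₀)
    (h : ∀ γ ∈ B.Δ, B.coord x γ = B.coord y γ) : x = y := by
  rw [eq_sum_coord hx, eq_sum_coord hy]
  exact Finset.sum_congr rfl fun γ hγ => by rw [h γ hγ]

lemma coord_add {x y : V} (hx : x ∈ B.Φ₀) (hy : y ∈ B.Φ₀) (hxy : x + y ∈ B.Φ₀) :
    ∀ γ ∈ B.Δ, B.coord (x + y) γ = B.coord x γ + B.coord y γ :=
  coord_eq_of_eq_sum hxy (by
    simp only [Int.cast_add, add_smul, Finset.sum_add_distrib, ← eq_sum_coord hx,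
      ← eq_sum_coord hy])

lemma coord_neg_s6 {x : V} (hx : x ∈ B.Φ₀) : ∀ γ ∈ B.Δ, B.coord (-x) γ = -B.coord x γ :=
  coord_eq_of_eq_sum (neg_mem_Φ₀ hx) (by
    simp only [Int.cast_neg, neg_smul, Finset.sum_neg_distrib, ← eq_sum_coord hx])

lemma coord_simple {γ : V} (hγ : γ ∈ B.Δ) :
    ∀ δ ∈ B.Δ, B.coord γ δ = if δ = γ then 1 else 0 :=
  coord_eq_of_eq_sum (mem_Φ₀_of_mem (B.base_sub hγ)) (by
    simp [ite_smul, Finset.sum_ite_eq', hγ])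

lemma coord_le_highest {x : V} (hx : x ∈ B.Φ₀) : ∀ γ ∈ B.Δ, B.coord x γ ≤ B.coord B.highest γ := by
  rcases mem_Φ₀.1 hx with hx | rfl
  · exact B.highest_is_highest x hx
  · intro γ hγ
    linarith [B.coord_zero γ, B.highest_pos γ hγ]

lemma eq_zero_of_coord_eq_zero {x : V} (hx : x ∈ B.Φ₀) (h : ∀ γ ∈ B.Δ, B.coord x γ = 0) :
    x = 0 :=
  coord_inj hx zero_mem_Φ₀ fun γ hγ => by rw [h γ hγ, B.coord_zero]

lemma coord_nonpos_of_le_simple {γ x : V} (hγ : γ ∈ B.Δ) (hx : x ∈ B.Φ) (hxγ : x ≠ γ)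
    (h : ∀ δ ∈ B.Δ, B.coord x δ ≤ B.coord γ δ) : ∀ δ ∈ B.Δ, B.coord x δ ≤ 0 := by
  refine (B.coord_sign x hx).resolve_left fun hpos => ?_
  have hoff : ∀ δ ∈ B.Δ, δ ≠ γ → B.coord x δ = 0 := fun δ hδ hne =>
    le_antisymm (by simpa [coord_simple hγ δ hδ, hne] using h δ hδ) (hpos δ hδ)
  rcases (show B.coord x γ = 0 ∨ B.coord x γ = 1 by
    have := h γ hγ; simp only [coord_simple hγ γ hγ, if_true] at this
    have := hpos γ hγ; omega) with h0 | h1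
  · refine ne_zero_of_mem hx (eq_zero_of_coord_eq_zero (mem_Φ₀_of_mem hx) fun δ hδ => ?_)
    by_cases hδγ : δ = γ
    · rwa [hδγ]
    · exact hoff δ hδ hδγ
  · refine hxγ (coord_inj (mem_Φ₀_of_mem hx) (mem_Φ₀_of_mem (B.base_sub hγ)) fun δ hδ => ?_)
    by_cases hδγ : δ = γ
    · subst hδγ; simp [coord_simple hγ, h1, hγ]
    · simp [coord_simple hγ δ hδ, hδγ, hoff δ hδ hδγ]

lemma inner_self_pos_of_mem {x : V} (hx : x ∈ B.Φ) : 0 < ⟪x, x⟫ :=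
  real_inner_self_pos.2 (ne_zero_of_mem hx)

lemma exists_two_inner_eq {x y : V} (hx : x ∈ B.Φ) (hy : y ∈ B.Φ) :
    ∃ n : ℤ, 2 * ⟪x, y⟫ = n * ⟪x, x⟫ := by
  obtain ⟨n, hn⟩ := B.crystallographic x hx y hy
  exact ⟨n, by rw [← hn, div_mul_cancel₀ _ (inner_self_pos_of_mem hx).ne']⟩

lemma sub_smul_mem_of_two_inner_eq {x y : V} (hx : x ∈ B.Φ) (hy : y ∈ B.Φ) {n : ℤ}
    (h : 2 * ⟪x, y⟫ = n * ⟪x, x⟫) : y - (n : ℝ) • x ∈ B.Φ := by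
  have hn : 2 * ⟪y, x⟫ / ⟪x, x⟫ = n := by
    rw [real_inner_comm x y, h, mul_div_cancel_right₀ _ (inner_self_pos_of_mem hx).ne']
  have := B.reflect_mem x hx y hy
  rwa [hn] at this

lemma inner_sq_lt {x y : V} (hx : x ∈ B.Φ) (hy : y ∈ B.Φ) (hyx : y ≠ x) (hyx' : y ≠ -x) :
    ⟪x, y⟫ ^ 2 < ⟪x, x⟫ * ⟪y, y⟫ := by
  have hlt : |⟪x, y⟫| < ‖x‖ * ‖y‖ := by
    refine (abs_real_inner_le_norm x y).lt_of_ne fun h => ?_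
    obtain ⟨r, -, rfl⟩ := (norm_inner_eq_norm_iff (𝕜 := ℝ) (ne_zero_of_mem hx)
      (ne_zero_of_mem hy)).1 (by rwa [Real.norm_eq_abs])
    rcases B.reduced x hx r hy with rfl | rfl
    · exact hyx (one_smul ℝ x)
    · exact hyx' (neg_one_smul ℝ x)
  rw [real_inner_self_eq_norm_sq, real_inner_self_eq_norm_sq, ← mul_pow, ← sq_abs]
  exact pow_lt_pow_left₀ hlt (abs_nonneg _) two_ne_zero

lemma pairing_mul_lt_four {x y : V} (hx : x ∈ B.Φ) (hy : y ∈ B.Φ) (hyx : y ≠ x)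
    (hyx' : y ≠ -x) {n m : ℤ} (hn : 2 * ⟪x, y⟫ = n * ⟪x, x⟫) (hm : 2 * ⟪y, x⟫ = m * ⟪y, y⟫) :
    n * m < 4 := by
  rw [real_inner_comm] at hm
  have h : ((n * m : ℤ) : ℝ) * (⟪x, x⟫ * ⟪y, y⟫) < 4 * (⟪x, x⟫ * ⟪y, y⟫) :=
    calc ((n * m : ℤ) : ℝ) * (⟪x, x⟫ * ⟪y, y⟫) = 4 * ⟪x, y⟫ ^ 2 := by
          push_cast; linear_combination (-(2 * ⟪x, y⟫)) * hn - (n * ⟪x, x⟫) * hm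
      _ < 4 * (⟪x, x⟫ * ⟪y, y⟫) := by linarith [inner_sq_lt hx hy hyx hyx']
  exact_mod_cast lt_of_mul_lt_mul_right h
    (mul_pos (inner_self_pos_of_mem hx) (inner_self_pos_of_mem hy)).le

lemma add_mem_Φ₀_of_inner_neg {x y : V} (hx : x ∈ B.Φ) (hy : y ∈ B.Φ) (h : ⟪x, y⟫ < 0) :
    x + y ∈ B.Φ₀ := by
  by_cases hyx' : y = -x
  · simp [hyx', zero_mem_Φ₀]
  have hyx : y ≠ x := by
    rintro rfl
    exact (inner_self_pos_of_mem hx).not_gt h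
  obtain ⟨n, hn⟩ := exists_two_inner_eq hx hy
  obtain ⟨m, hm⟩ := exists_two_inner_eq hy hx
  have hn0 : n < 0 := by
    have : (n : ℝ) * ⟪x, x⟫ < 0 := by linarith
    exact_mod_cast neg_of_mul_neg_left this (inner_self_pos_of_mem hx).le
  have hm0 : m < 0 := by
    have : (m : ℝ) * ⟪y, y⟫ < 0 := by rw [real_inner_comm] at hm; linarith
    exact_mod_cast neg_of_mul_neg_left this (inner_self_pos_of_mem hy).le
  have := pairing_mul_lt_four hx hy hyx hyx' hn hm
  rcases (show n = -1 ∨ m = -1 by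
    by_contra! h'
    nlinarith [show n ≤ -2 by omega, show m ≤ -2 by omega]) with rfl | rfl
  · simpa [add_comm] using mem_Φ₀_of_mem (sub_smul_mem_of_two_inner_eq hx hy hn)
  · simpa using mem_Φ₀_of_mem (sub_smul_mem_of_two_inner_eq hy hx hm)

lemma sub_mem_Φ₀_of_inner_pos {x y : V} (hx : x ∈ B.Φ) (hy : y ∈ B.Φ) (h : 0 < ⟪x, y⟫) :
    x - y ∈ B.Φ₀ := by
  simpa [sub_eq_add_neg] using
    add_mem_Φ₀_of_inner_neg hx (B.neg_mem y hy) (by rw [inner_neg_right]; linarith)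

lemma inner_nonneg_of_add_not_mem {x y : V} (hx : x ∈ B.Φ) (hy : y ∈ B.Φ)
    (h : x + y ∉ B.Φ₀) : 0 ≤ ⟪x, y⟫ :=
  not_lt.1 fun h' => h (add_mem_Φ₀_of_inner_neg hx hy h')

lemma inner_self_eq_two_inner {x y : V} (hx : x ∈ B.Φ) (hy : y ∈ B.Φ) (hyx : y ≠ x)
    (h : ⟪x, x⟫ ≤ ⟪x, y⟫) : ⟪y, y⟫ = 2 * ⟪x, y⟫ := by
  have hxx := inner_self_pos_of_mem hx
  have hyy := inner_self_pos_of_mem hy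
  have hyx' : y ≠ -x := by
    rintro rfl
    rw [inner_neg_right] at h
    linarith
  obtain ⟨n, hn⟩ := exists_two_inner_eq hx hy
  obtain ⟨m, hm⟩ := exists_two_inner_eq hy hx
  have hn2 : 2 ≤ n := by
    have : (2 : ℝ) * ⟪x, x⟫ ≤ n * ⟪x, x⟫ := by linarith
    exact_mod_cast le_of_mul_le_mul_right this hxx
  have hm1 : 0 < m := by
    have : 0 < (m : ℝ) * ⟪y, y⟫ := by rw [real_inner_comm] at hm; linarith
    exact_mod_cast pos_of_mul_pos_left this hyy.le
  have := pairing_mul_lt_four hx hy hyx hyx' hn hm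
  obtain rfl : m = 1 := by nlinarith
  rw [real_inner_comm, Int.cast_one, one_mul] at hm
  linarith

lemma inner_highest_simple_nonneg {γ : V} (hγ : γ ∈ B.Δ) : 0 ≤ ⟪B.highest, γ⟫ := by
  refine inner_nonneg_of_add_not_mem B.highest_mem (B.base_sub hγ) fun h => ?_
  have := coord_le_highest h γ hγ
  rw [coord_add (mem_Φ₀_of_mem B.highest_mem) (mem_Φ₀_of_mem (B.base_sub hγ)) h γ hγ,
    coord_simple hγ γ hγ] at this
  simp at this

lemma inner_highest_nonpos {x : V} (hx : x ∈ B.Φ₀) (h : ∀ γ ∈ B.Δ, B.coord x γ ≤ 0) :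
    ⟪B.highest, x⟫ ≤ 0 := by
  rw [eq_sum_coord hx, inner_sum]
  refine Finset.sum_nonpos fun γ hγ => ?_
  rw [real_inner_smul_right]
  exact mul_nonpos_of_nonpos_of_nonneg (by exact_mod_cast h γ hγ) (inner_highest_simple_nonneg hγ)

lemma eq_highest_of_le {x : V} (hx : x ∈ B.Φ) (h : ∀ γ ∈ B.Δ, B.coord B.highest γ ≤ B.coord x γ) :
    x = B.highest :=
  coord_inj (mem_Φ₀_of_mem hx) (mem_Φ₀_of_mem B.highest_mem) fun γ hγ =>
    le_antisymm (B.highest_is_highest x hx γ hγ) (h γ hγ)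

lemma two_inner_highest_le {x : V} (hx : x ∈ B.Φ) (hne : x ≠ B.highest) :
    2 * ⟪B.highest, x⟫ ≤ ⟪B.highest, B.highest⟫ := by
  have hθ := B.highest_mem
  obtain ⟨n, hn⟩ := exists_two_inner_eq hθ hx
  by_cases hn1 : n ≤ 1
  · rw [hn]
    nlinarith [inner_self_pos_of_mem hθ, (show (n : ℝ) ≤ 1 by exact_mod_cast hn1)]
  exfalso
  have hy := B.neg_mem _ (sub_smul_mem_of_two_inner_eq hθ hx hn)
  have hcoord : ∀ γ ∈ B.Δ, B.coord (-(x - (n : ℝ) • B.highest)) γ =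
      n * B.coord B.highest γ - B.coord x γ :=
    coord_eq_of_eq_sum (mem_Φ₀_of_mem hy) (by
      simp only [neg_sub, Int.cast_sub, Int.cast_mul, sub_smul, mul_smul,
        Finset.sum_sub_distrib, ← Finset.smul_sum, ← eq_sum_coord (mem_Φ₀_of_mem hθ),
        ← eq_sum_coord (mem_Φ₀_of_mem hx)])
  have heq : -(x - (n : ℝ) • B.highest) = B.highest := eq_highest_of_le hy fun γ hγ => by
    rw [hcoord γ hγ]
    nlinarith [B.highest_is_highest x hx γ hγ, B.highest_pos γ hγ]
  have hx' : x = ((n - 1 : ℤ) : ℝ) • B.highest := by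
    calc x = (n : ℝ) • B.highest - -(x - (n : ℝ) • B.highest) := by abel
      _ = ((n - 1 : ℤ) : ℝ) • B.highest := by rw [heq]; push_cast; rw [sub_smul, one_smul]
  rcases B.reduced _ hθ _ (hx' ▸ hx) with h | h
  · obtain rfl : n = 2 := by
      have : ((n - 1 : ℤ) : ℝ) = 1 := h
      have : n - 1 = 1 := by exact_mod_cast this
      omega
    exact hne (by rw [hx']; norm_num)
  · have : ((n - 1 : ℤ) : ℝ) = -1 := h
    have : n - 1 = -1 := by exact_mod_cast this
    omega

lemma sub_mem_and_sub_add_mem {γ r x : V} (hγ : γ ∈ B.Φ) (hx : x ∈ B.Φ) (hy : r + γ ∈ B.Φ)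
    (hxy : 0 < ⟪x, r + γ⟫) (hγx : ⟪γ, x⟫ < ⟪γ, r + γ⟫) (hxγ : x + γ ∉ B.Φ₀) :
    r - x ∈ B.Φ ∧ r - x + γ ∈ B.Φ := by
  have hz : x - (r + γ) ∈ B.Φ := by
    refine (mem_Φ₀.1 (sub_mem_Φ₀_of_inner_pos hx hy hxy)).resolve_right fun h => ?_
    rw [sub_eq_zero.1 h] at hγx
    exact lt_irrefl _ hγx
  have hzγ : x - (r + γ) + γ ∈ B.Φ₀ := add_mem_Φ₀_of_inner_neg hz hγ (by
    rw [real_inner_comm, inner_sub_right]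
    linarith)
  rw [show x - (r + γ) + γ = -(r - x) by abel] at hzγ
  refine ⟨(mem_Φ₀.1 (by simpa using neg_mem_Φ₀ hzγ)).resolve_right fun h => hxγ ?_, ?_⟩
  · rw [← sub_eq_zero.1 h]
    exact mem_Φ₀_of_mem hy
  · simpa [sub_add_eq_add_sub] using B.neg_mem _ hz

theorem sum_add_simple_not_mem_Φ₀ {ι : Type*} {γ : V} (hγ : γ ∈ B.Δ) (s : Finset ι)
    {q : ι → V} (hq : ∀ i ∈ s, q i = 0 ∨ (q i ∈ B.Φ ∧ q i + γ ∉ B.Φ₀))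
    (hs : ∑ i ∈ s, q i ∈ B.Φ) : ∑ i ∈ s, q i + γ ∉ B.Φ₀ := by
  induction s using Finset.strongInduction with
  | H s ih =>
  have hγΦ := B.base_sub hγ
  have hterm : ∀ i ∈ s, 0 ≤ ⟪γ, q i⟫ := fun i hi => by
    rcases hq i hi with h | ⟨hqi, hqiγ⟩
    · simp [h]
    · rw [real_inner_comm]
      exact inner_nonneg_of_add_not_mem hqi hγΦ hqiγ
  set r := ∑ i ∈ s, q i
  have hγr : ⟪γ, r⟫ = ∑ i ∈ s, ⟪γ, q i⟫ := inner_sum _ _ _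
  have hγr₀ : 0 ≤ ⟪γ, r⟫ := hγr ▸ Finset.sum_nonneg hterm
  have hγy : ⟪γ, r + γ⟫ = ⟪γ, r⟫ + ⟪γ, γ⟫ := inner_add_right _ _ _
  have hγγ := inner_self_pos_of_mem hγΦ
  intro hy
  rcases mem_Φ₀.1 hy with hy | hy
  swap
  · rw [eq_neg_of_add_eq_zero_left hy, inner_neg_right] at hγr₀
    linarith
  have hyy := inner_self_eq_two_inner hγΦ hy (fun h => ne_zero_of_mem hs (add_eq_right.1 h))
    (by linarith)
  have hry : 0 < ∑ i ∈ s, ⟪q i, r + γ⟫ := by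
    have : ⟪r + γ, r + γ⟫ = ⟪r, r + γ⟫ + ⟪γ, r + γ⟫ := inner_add_left _ _ _
    rw [← sum_inner]
    linarith
  obtain ⟨i, hi, hiy⟩ := Finset.exists_lt_of_sum_lt (f := fun _ => (0 : ℝ))
    (g := fun i => ⟪q i, r + γ⟫) (by rwa [Finset.sum_const_zero])
  obtain ⟨hqi, hqiγ⟩ := (hq i hi).resolve_left fun h => by simp [h] at hiy
  have hγqi : ⟪γ, q i⟫ < ⟪γ, r + γ⟫ := by linarith [hγr ▸ Finset.single_le_sum hterm hi]
  obtain ⟨hrq, hrqγ⟩ := sub_mem_and_sub_add_mem hγΦ hqi hy hiy hγqi hqiγ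
  have herase : ∑ j ∈ s.erase i, q j = r - q i := by
    rw [eq_sub_iff_add_eq, Finset.sum_erase_add _ _ hi]
  exact ih _ (Finset.erase_ssubset hi) (fun j hj => hq j (Finset.mem_of_mem_erase hj))
    (herase ▸ hrq) (herase ▸ mem_Φ₀_of_mem hrqγ)

variable (B) in
def affCoord (p : V × ℤ) (γ : V) : ℤ := B.coord p.1 γ + p.2 * B.coord B.highest γ

variable (B) in
def affHeight (p : V × ℤ) : ℤ := p.2 + ∑ γ ∈ B.Δ, B.affCoord p γ

lemma affCoord_zero (γ : V) : B.affCoord 0 γ = 0 := by simp [affCoord, B.coord_zero]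

lemma affLe_iff {p q : V × ℤ} :
    B.affLe p q ↔ p.2 ≤ q.2 ∧ ∀ γ ∈ B.Δ, B.affCoord p γ ≤ B.affCoord q γ := Iff.rfl

lemma affCoord_le_of_affLe {p q : V × ℤ} (h : B.affLe p q) {γ : V} (hγ : γ ∈ B.Δ) :
    B.affCoord p γ ≤ B.affCoord q γ := h.2 γ hγ

lemma affLe_refl (p : V × ℤ) : B.affLe p p := ⟨le_rfl, fun _ _ => le_rfl⟩

lemma affLe_trans {p q r : V × ℤ} (h₁ : B.affLe p q) (h₂ : B.affLe q r) : B.affLe p r :=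
  ⟨h₁.1.trans h₂.1, fun γ hγ => (h₁.2 γ hγ).trans (h₂.2 γ hγ)⟩

lemma affLe_add_snd_iff {x y : V} {m n : ℤ} (k : ℤ) :
    B.affLe (x, k + m) (y, k + n) ↔ B.affLe (x, m) (y, n) := by
  simp only [affLe, add_mul]
  exact and_congr (by omega) (forall₂_congr fun γ _ => by constructor <;> intro h <;> linarith)

lemma affCoord_add {p q : V × ℤ} (hp : p.1 ∈ B.Φ₀) (hq : q.1 ∈ B.Φ₀) (hpq : p.1 + q.1 ∈ B.Φ₀)
    {γ : V} (hγ : γ ∈ B.Δ) : B.affCoord (p + q) γ = B.affCoord p γ + B.affCoord q γ := by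
  simp only [affCoord, Prod.fst_add, Prod.snd_add, coord_add hp hq hpq γ hγ]
  ring

lemma sum_affCoord_smul {p : V × ℤ} (hp : p.1 ∈ B.Φ₀) :
    ∑ γ ∈ B.Δ, (B.affCoord p γ : ℝ) • γ = p.1 + (p.2 : ℝ) • B.highest := by
  simp only [affCoord, Int.cast_add, Int.cast_mul, add_smul, mul_smul, Finset.sum_add_distrib,
    ← Finset.smul_sum, ← eq_sum_coord hp, ← eq_sum_coord (mem_Φ₀_of_mem B.highest_mem)]

lemma fst_sub_fst_eq {p q : V × ℤ} (hp : p.1 ∈ B.Φ₀) (hq : q.1 ∈ B.Φ₀) :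
    q.1 - p.1 = ((q.2 - p.2 : ℤ) : ℝ) • (-B.highest) +
      ∑ γ ∈ B.Δ, ((B.affCoord q γ - B.affCoord p γ : ℤ) : ℝ) • γ := by
  simp only [Int.cast_sub, sub_smul, Finset.sum_sub_distrib, sum_affCoord_smul hq,
    sum_affCoord_smul hp]
  module

lemma affLe_self_add {p s : V × ℤ} (hp : p.1 ∈ B.Φ₀) (hs : s.1 ∈ B.Φ₀) (hps : p.1 + s.1 ∈ B.Φ₀)
    (h₀ : B.affLe 0 s) : B.affLe p (p + s) := by
  refine affLe_iff.2 ⟨by simpa using h₀.1, fun γ hγ => ?_⟩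
  have := affCoord_le_of_affLe h₀ hγ
  rw [affCoord_zero] at this
  rw [affCoord_add hp hs hps hγ]
  linarith

lemma affHeight_le {p q : V × ℤ} (h : B.affLe p q) : B.affHeight p ≤ B.affHeight q :=
  add_le_add h.1 (Finset.sum_le_sum h.2)

lemma eq_of_affLe_of_affHeight_le {p q : V × ℤ} (hp : p.1 ∈ B.Φ₀) (hq : q.1 ∈ B.Φ₀)
    (h : B.affLe p q) (hh : B.affHeight q ≤ B.affHeight p) : p = q := by
  have hle : ∀ γ ∈ B.Δ, B.affCoord p γ ≤ B.affCoord q γ := fun γ hγ => affCoord_le_of_affLe h hγ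
  have hsum := Finset.sum_le_sum hle
  have hlev : p.2 = q.2 := by unfold affHeight at hh; linarith [h.1]
  have hcoord := (Finset.sum_eq_sum_iff_of_le hle).1 (by unfold affHeight at hh; linarith [h.1])
  refine Prod.ext (coord_inj hp hq fun γ hγ => ?_) hlev
  have := hcoord γ hγ
  simp only [affCoord, hlev] at this
  linarith

lemma affLe_antisymm {p q : V × ℤ} (hp : p.1 ∈ B.Φ₀) (hq : q.1 ∈ B.Φ₀) (h₁ : B.affLe p q)
    (h₂ : B.affLe q p) : p = q :=
  eq_of_affLe_of_affHeight_le hp hq h₁ (affHeight_le h₂)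

lemma affHeight_lt {p q : V × ℤ} (hp : p.1 ∈ B.Φ₀) (hq : q.1 ∈ B.Φ₀) (h : B.affLe p q)
    (hne : p ≠ q) : B.affHeight p < B.affHeight q :=
  lt_of_not_ge fun hh => hne (eq_of_affLe_of_affHeight_le hp hq h hh)

variable (B) in
/-- The affine roots `(x, ε_x)` with `x ∈ Φ`, together with `δ = (0, 1)`: they are exactly the
points of `Φ₀ × ℤ` lying strictly above `0` and weakly below `δ`. -/
structure IsRigid (p : V × ℤ) : Prop where
  fst_mem : p.1 ∈ B.Φ₀
  ne_zero : p ≠ 0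
  zero_affLe : B.affLe 0 p
  affLe_delta : B.affLe p (0, 1)

lemma IsRigid.of_affLe {p q : V × ℤ} (hp : B.IsRigid p) (hq : q.1 ∈ B.Φ₀) (hpq : B.affLe p q)
    (hq₁ : B.affLe q (0, 1)) : B.IsRigid q :=
  ⟨hq, fun h => hp.ne_zero (affLe_antisymm hp.fst_mem zero_mem_Φ₀ (h ▸ hpq) hp.zero_affLe),
    affLe_trans hp.zero_affLe hpq, hq₁⟩

lemma IsRigid.snd_eq_zero_or_one {p : V × ℤ} (hp : B.IsRigid p) : p.2 = 0 ∨ p.2 = 1 := by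
  have h₀ : 0 ≤ p.2 := hp.zero_affLe.1
  have h₁ : p.2 ≤ 1 := hp.affLe_delta.1
  omega

lemma IsRigid.coord_nonneg {p : V × ℤ} (hp : B.IsRigid p) (h₀ : p.2 = 0) :
    ∀ γ ∈ B.Δ, 0 ≤ B.coord p.1 γ := fun γ hγ => by
  simpa [affCoord, h₀, B.coord_zero] using hp.zero_affLe.2 γ hγ

lemma IsRigid.coord_nonpos {p : V × ℤ} (hp : B.IsRigid p) (h₁ : p.2 = 1) :
    ∀ γ ∈ B.Δ, B.coord p.1 γ ≤ 0 := fun γ hγ => by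
  simpa [affCoord, h₁, B.coord_zero] using hp.affLe_delta.2 γ hγ

lemma eps_of_isPos {x : V} (h : B.IsPos x) : B.eps x = 0 := by simp [eps, h]

lemma eps_of_not_isPos {x : V} (h : ¬ B.IsPos x) : B.eps x = 1 := by simp [eps, h]

lemma IsRigid.snd_eq_eps {p : V × ℤ} (hp : B.IsRigid p) (hΦ : p.1 ∈ B.Φ) : p.2 = B.eps p.1 := by
  rcases hp.snd_eq_zero_or_one with h | h
  · rw [h, eps_of_isPos (hp.coord_nonneg h)]
  · rw [h, eps_of_not_isPos fun hpos => ne_zero_of_mem hΦ (eq_zero_of_coord_eq_zero hp.fst_mem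
      fun γ hγ => le_antisymm (hp.coord_nonpos h γ hγ) (hpos γ hγ))]

lemma IsRigid.snd_eq_one {p : V × ℤ} (hp : B.IsRigid p) (h : p.1 = 0) : p.2 = 1 :=
  hp.snd_eq_zero_or_one.resolve_left fun h₀ => hp.ne_zero (Prod.ext h h₀)

lemma isRigid_root {x : V} (hx : x ∈ B.Φ) : B.IsRigid (x, B.eps x) := by
  have hne : (x, B.eps x) ≠ 0 := fun h => ne_zero_of_mem hx (congrArg Prod.fst h)
  by_cases hpos : B.IsPos x
  · rw [eps_of_isPos hpos] at hne ⊢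
    exact ⟨mem_Φ₀_of_mem hx, hne, ⟨le_rfl, fun γ hγ => by simpa [B.coord_zero] using hpos γ hγ⟩,
      ⟨zero_le_one, fun γ hγ => by
        simpa [affCoord, B.coord_zero] using B.highest_is_highest x hx γ hγ⟩⟩
  · rw [eps_of_not_isPos hpos] at hne ⊢
    have hneg := (B.coord_sign x hx).resolve_left hpos
    refine ⟨mem_Φ₀_of_mem hx, hne, ⟨zero_le_one, fun γ hγ => ?_⟩, ⟨le_rfl, fun γ hγ => ?_⟩⟩
    · have := B.highest_is_highest _ (B.neg_mem x hx) γ hγ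
      rw [coord_neg_s6 (mem_Φ₀_of_mem hx) γ hγ] at this
      simp only [Prod.fst_zero, Prod.snd_zero, B.coord_zero, zero_mul, add_zero, one_mul]
      linarith
    · simpa [affCoord, B.coord_zero] using hneg γ hγ

variable (B) in
def IsAffSimple (s : V × ℤ) : Prop := (s.1 ∈ B.Δ ∧ s.2 = 0) ∨ s = (-B.highest, 1)

lemma affCoord_neg_highest {γ : V} (hγ : γ ∈ B.Δ) : B.affCoord (-B.highest, 1) γ = 0 := by
  simp [affCoord, coord_neg_s6 (mem_Φ₀_of_mem B.highest_mem) γ hγ]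

lemma IsAffSimple.fst_mem {s : V × ℤ} (hs : B.IsAffSimple s) : s.1 ∈ B.Φ := by
  rcases hs with ⟨h, -⟩ | rfl
  exacts [B.base_sub h, B.neg_mem _ B.highest_mem]

lemma affCoord_simple {γ δ : V} (hγ : γ ∈ B.Δ) (hδ : δ ∈ B.Δ) :
    B.affCoord (γ, 0) δ = if δ = γ then 1 else 0 := by
  simp [affCoord, coord_simple hγ δ hδ]

lemma IsAffSimple.zero_affLe {s : V × ℤ} (hs : B.IsAffSimple s) : B.affLe 0 s := by
  rcases hs with ⟨hγ, h₀⟩ | rfl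
  · obtain ⟨γ, n⟩ := s
    obtain rfl : n = 0 := h₀
    refine affLe_iff.2 ⟨le_rfl, fun δ hδ => ?_⟩
    rw [affCoord_zero, affCoord_simple hγ hδ]
    split_ifs <;> norm_num
  · exact affLe_iff.2 ⟨zero_le_one, fun δ hδ => by rw [affCoord_zero, affCoord_neg_highest hδ]⟩

lemma isRigid_add_simple {γ : V} {p : V × ℤ} (hγ : γ ∈ B.Δ) (hp : B.IsRigid p) (hpΦ : p.1 ∈ B.Φ)
    (hmem : p.1 + γ ∈ B.Φ₀) : B.IsRigid (p + (γ, 0)) := by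
  have hγ₀ := mem_Φ₀_of_mem (B.base_sub hγ)
  have hsimple : B.IsAffSimple (γ, 0) := .inl ⟨hγ, rfl⟩
  refine hp.of_affLe hmem (affLe_self_add hp.fst_mem hγ₀ hmem hsimple.zero_affLe)
    ⟨by simpa using hp.affLe_delta.1, fun δ hδ => ?_⟩
  simp only [Prod.fst_add, Prod.snd_add, add_zero, B.coord_zero, zero_add, one_mul]
  rcases hp.snd_eq_zero_or_one with h₀ | h₁
  · rw [h₀, zero_mul, add_zero]
    exact coord_le_highest hmem δ hδ
  · rw [h₁, one_mul, add_le_iff_nonpos_left]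
    rcases mem_Φ₀.1 hmem with hmem' | h₀
    · refine coord_nonpos_of_le_simple hγ hmem'
        (fun h => ne_zero_of_mem hpΦ (add_eq_right.1 h)) (fun ε hε => ?_) δ hδ
      rw [coord_add (mem_Φ₀_of_mem hpΦ) hγ₀ hmem ε hε]
      linarith [hp.coord_nonpos h₁ ε hε]
    · rw [h₀, B.coord_zero]

lemma exists_isRigid_add_simple {ι : Type*} [Fintype ι] {γ : V} {τ : V × ℤ} (hγ : γ ∈ B.Δ)
    (hτ : B.IsRigid τ) (hτγ : B.IsRigid (τ + (γ, 0))) {q : ι → V × ℤ} (hq : ∀ i, B.IsRigid (q i))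
    (hsum : ∑ i, (q i).1 = τ.1) : ∃ i, B.IsRigid (q i + (γ, 0)) := by
  by_contra! hno
  have hblocked : ∀ i ∈ Finset.univ, (q i).1 = 0 ∨ ((q i).1 ∈ B.Φ ∧ (q i).1 + γ ∉ B.Φ₀) :=
    fun i _ => (mem_Φ₀.1 (hq i).fst_mem).symm.imp_right fun h =>
      ⟨h, fun hmem => hno i (isRigid_add_simple hγ (hq i) h hmem)⟩
  rcases mem_Φ₀.1 hτ.fst_mem with hτΦ | hτ₀
  · exact sum_add_simple_not_mem_Φ₀ hγ _ hblocked (hsum ▸ hτΦ) (by rw [hsum]; exact hτγ.fst_mem)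
  · have := hτγ.affLe_delta.2 γ hγ
    simp [hτ₀, hτ.snd_eq_one hτ₀, B.coord_zero, coord_simple hγ γ hγ] at this

lemma inner_highest_nonpos_of_not_isRigid_add {p : V × ℤ} (hp : B.IsRigid p)
    (hno : ¬ B.IsRigid (p + (-B.highest, 1))) : ⟪B.highest, p.1⟫ ≤ 0 := by
  have hθ := B.highest_mem
  have hθ₀ := mem_Φ₀_of_mem (B.neg_mem _ hθ)
  rcases hp.snd_eq_zero_or_one with h₀ | h₁
  · by_contra! hpos
    have hpΦ : p.1 ∈ B.Φ := (mem_Φ₀.1 hp.fst_mem).resolve_right fun h => by simp [h] at hpos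
    have hmem : p.1 + -B.highest ∈ B.Φ₀ := by
      simpa [sub_eq_add_neg] using sub_mem_Φ₀_of_inner_pos hpΦ hθ (by rwa [real_inner_comm])
    refine hno (hp.of_affLe hmem
      (affLe_self_add hp.fst_mem hθ₀ hmem (IsAffSimple.zero_affLe (Or.inr rfl)))
      (affLe_iff.2 ⟨by simp [h₀], fun δ hδ => ?_⟩))
    rw [affCoord_add hp.fst_mem hθ₀ hmem hδ, affCoord_neg_highest hδ, add_zero]
    exact affCoord_le_of_affLe hp.affLe_delta hδ
  · exact inner_highest_nonpos hp.fst_mem (hp.coord_nonpos h₁)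

lemma exists_isRigid_add_neg_highest {ι : Type*} [Fintype ι] {τ : V × ℤ} (hτ : B.IsRigid τ)
    (hτθ : B.IsRigid (τ + (-B.highest, 1))) {q : ι → V × ℤ} (hq : ∀ i, B.IsRigid (q i))
    (hsum : ∑ i, (q i).1 = τ.1) : ∃ i, B.IsRigid (q i + (-B.highest, 1)) := by
  by_contra! hno
  have hθθ := inner_self_pos_of_mem B.highest_mem
  have hτ₀ : τ.2 = 0 := by
    have h₁ : τ.2 + 1 ≤ 1 := hτθ.affLe_delta.1
    have h₀ : 0 ≤ τ.2 := hτ.zero_affLe.1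
    omega
  have hτq : ⟪B.highest, τ.1⟫ ≤ 0 := by
    rw [← hsum, inner_sum]
    exact Finset.sum_nonpos fun i _ => inner_highest_nonpos_of_not_isRigid_add (hq i) (hno i)
  have hmem : τ.1 - B.highest ∈ B.Φ₀ := by simpa [sub_eq_add_neg] using hτθ.fst_mem
  rcases mem_Φ₀.1 hmem with hmem | h₀
  · have hne : B.highest - τ.1 ≠ B.highest := fun h => hτ.ne_zero (Prod.ext (by simpa using h) hτ₀)
    have := two_inner_highest_le (by simpa using B.neg_mem _ hmem) hne
    rw [inner_sub_right] at this
    linarith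
  · rw [sub_eq_zero.1 h₀] at hτq
    linarith

lemma exists_isRigid_add {ι : Type*} [Fintype ι] {s τ : V × ℤ} (hs : B.IsAffSimple s)
    (hτ : B.IsRigid τ) (hτs : B.IsRigid (τ + s)) {q : ι → V × ℤ} (hq : ∀ i, B.IsRigid (q i))
    (hsum : ∑ i, (q i).1 = τ.1) : ∃ i, B.IsRigid (q i + s) := by
  rcases hs with ⟨hγ, h₀⟩ | rfl
  · obtain ⟨γ, n⟩ := s
    obtain rfl : n = 0 := h₀
    exact exists_isRigid_add_simple hγ hτ hτs hq hsum
  · exact exists_isRigid_add_neg_highest hτ hτs hq hsum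

lemma exists_step_of_inner_lt {bot top s : V × ℤ} (hbot : B.IsRigid bot) (hbΦ : bot.1 ∈ B.Φ)
    (htop : B.IsRigid top) (hs : B.IsAffSimple s) (hlev : bot.2 + s.2 ≤ top.2)
    (hcoord : ∀ γ ∈ B.Δ, B.affCoord bot γ + B.affCoord s γ ≤ B.affCoord top γ)
    (hinner : ⟪bot.1, s.1⟫ < ⟪top.1, s.1⟫) :
    ∃ mid, B.IsRigid mid ∧
      ((B.affLe bot mid ∧ mid + s = top) ∨ (bot + s = mid ∧ B.affLe mid top)) := by
  have hsΦ := hs.fst_mem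
  have hs₀ := mem_Φ₀_of_mem hsΦ
  by_cases hb : ⟪bot.1, s.1⟫ < 0
  · have hmid : bot.1 + s.1 ∈ B.Φ₀ := add_mem_Φ₀_of_inner_neg hbΦ hsΦ hb
    have hle : B.affLe (bot + s) top := affLe_iff.2 ⟨by simpa using hlev, fun γ hγ => by
      rw [affCoord_add hbot.fst_mem hs₀ hmid hγ]
      exact hcoord γ hγ⟩
    exact ⟨bot + s, hbot.of_affLe hmid (affLe_self_add hbot.fst_mem hs₀ hmid hs.zero_affLe)
      (affLe_trans hle htop.affLe_delta), .inr ⟨rfl, hle⟩⟩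
  · have ht : 0 < ⟪top.1, s.1⟫ := by linarith
    have htΦ : top.1 ∈ B.Φ := (mem_Φ₀.1 htop.fst_mem).resolve_right fun h => by simp [h] at ht
    have hmid : (top - s).1 ∈ B.Φ₀ := sub_mem_Φ₀_of_inner_pos htΦ hsΦ ht
    have hadd : top - s + s = top := sub_add_cancel top s
    have hmids : (top - s).1 + s.1 ∈ B.Φ₀ := by simpa using htop.fst_mem
    have hle : B.affLe bot (top - s) := affLe_iff.2 ⟨by simp; omega, fun γ hγ => by
      have := affCoord_add hmid hs₀ hmids hγ
      rw [hadd] at this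
      linarith [hcoord γ hγ]⟩
    have hle' : B.affLe (top - s) top := by
      simpa [hadd] using affLe_self_add hmid hs₀ hmids hs.zero_affLe
    exact ⟨top - s, hbot.of_affLe hmid hle (affLe_trans hle' htop.affLe_delta), .inl ⟨hle, hadd⟩⟩

lemma exists_step {bot top : V × ℤ} (hbot : B.IsRigid bot) (htop : B.IsRigid top)
    (hle : B.affLe bot top) (hne : bot ≠ top) :
    ∃ s mid, B.IsAffSimple s ∧ B.IsRigid mid ∧
      ((B.affLe bot mid ∧ mid + s = top) ∨ (bot + s = mid ∧ B.affLe mid top)) := by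
  have hbΦ : bot.1 ∈ B.Φ := by
    refine (mem_Φ₀.1 hbot.fst_mem).resolve_right fun h₀ => hne ?_
    have hδ : bot = (0, 1) := Prod.ext h₀ (hbot.snd_eq_one h₀)
    exact affLe_antisymm hbot.fst_mem htop.fst_mem hle (hδ ▸ htop.affLe_delta)
  have hw : top.1 - bot.1 ≠ 0 := fun h => hne <| by
    have h₁ : top.1 = bot.1 := sub_eq_zero.1 h
    exact Prod.ext h₁.symm (by rw [hbot.snd_eq_eps hbΦ, htop.snd_eq_eps (h₁ ▸ hbΦ), h₁])
  rcases exists_pos_coeff_and_inner_pos (by exact_mod_cast sub_nonneg.2 hle.1)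
      (fun γ hγ => by exact_mod_cast sub_nonneg.2 (affCoord_le_of_affLe hle hγ))
      (fst_sub_fst_eq hbot.fst_mem htop.fst_mem) hw with
    ⟨h₀, hinner⟩ | ⟨γ, hγ, hd, hinner⟩
  · rw [inner_sub_left] at hinner
    obtain ⟨mid, hmid, h⟩ := exists_step_of_inner_lt hbot hbΦ htop (.inr rfl)
      (by have := Int.cast_pos.1 h₀; simp only; omega)
      (fun δ hδ => by rw [affCoord_neg_highest hδ, add_zero]; exact affCoord_le_of_affLe hle hδ)
      (by linarith)
    exact ⟨_, mid, .inr rfl, hmid, h⟩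
  · rw [inner_sub_left] at hinner
    have hd' : B.affCoord bot γ < B.affCoord top γ := by
      have := Int.cast_pos.1 hd
      omega
    obtain ⟨mid, hmid, h⟩ := exists_step_of_inner_lt (s := (γ, 0)) hbot hbΦ htop (.inl ⟨hγ, rfl⟩)
      (by simpa using hle.1) (fun δ hδ => by
        rw [affCoord_simple hγ hδ]
        split_ifs with hδγ
        · subst hδγ
          omega
        · rw [add_zero]
          exact affCoord_le_of_affLe hle hδ)
      (by simpa using hinner)
    exact ⟨_, mid, .inl ⟨hγ, rfl⟩, hmid, h⟩

lemma affHeight_lt_add {p s : V × ℤ} (hs : B.IsAffSimple s) (hp : p.1 ∈ B.Φ₀)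
    (hps : p.1 + s.1 ∈ B.Φ₀) : B.affHeight p < B.affHeight (p + s) :=
  affHeight_lt hp hps (affLe_self_add hp (mem_Φ₀_of_mem hs.fst_mem) hps hs.zero_affLe)
    fun h => ne_zero_of_mem hs.fst_mem (by simpa using congrArg Prod.fst h)

variable (B) in
def RigidStep (σ τ : V × ℤ) : Prop :=
  B.IsRigid σ ∧ B.IsRigid τ ∧ ∃ s, B.IsAffSimple s ∧ σ + s = τ

theorem reflTransGen_rigidStep {bot top : V × ℤ} (hbot : B.IsRigid bot) (htop : B.IsRigid top)
    (hle : B.affLe bot top) : Relation.ReflTransGen B.RigidStep bot top := by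
  obtain ⟨n, hn⟩ : ∃ n, (B.affHeight top - B.affHeight bot).toNat = n := ⟨_, rfl⟩
  induction n using Nat.strong_induction_on generalizing bot top with
  | _ n ih =>
  by_cases hne : bot = top
  · exact hne ▸ .refl
  obtain ⟨s, mid, hs, hmid, ⟨hbm, rfl⟩ | ⟨rfl, hmt⟩⟩ := exists_step hbot htop hle hne
  · have := affHeight_le hbm
    have := affHeight_lt_add hs hmid.fst_mem htop.fst_mem
    exact (ih _ (by omega) hbot hmid hbm rfl).tail ⟨hmid, htop, s, hs, rfl⟩
  · have := affHeight_lt_add hs hbot.fst_mem hmid.fst_mem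
    have := affHeight_le hmt
    exact .head ⟨hbot, hmid, s, hs, rfl⟩ (ih _ (by omega) hmid htop hmt rfl)

theorem exists_lift_of_reflTransGen {bot top : V × ℤ}
    (h : Relation.ReflTransGen B.RigidStep bot top) {ι : Type*} [Fintype ι] {p : ι → V × ℤ}
    (hp : ∀ i, B.IsRigid (p i)) (hsum : ∑ i, (p i).1 = bot.1) :
    ∃ q : ι → V × ℤ, (∀ i, B.IsRigid (q i)) ∧ (∀ i, B.affLe (p i) (q i)) ∧
      ∑ i, q i = ∑ i, p i + (top - bot) := by
  induction h with
  | refl => exact ⟨p, hp, fun i => affLe_refl _, by simp⟩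
  | @tail τ τ' _ hstep ih =>
    obtain ⟨q, hq, hpq, hqsum⟩ := ih
    obtain ⟨hτ, hτ', s, hs, rfl⟩ := hstep
    have hqτ : ∑ i, (q i).1 = τ.1 := by
      rw [← Prod.fst_sum, hqsum, Prod.fst_add, Prod.fst_sum, hsum, Prod.fst_sub]
      abel
    obtain ⟨i, hi⟩ := exists_isRigid_add hs hτ hτ' hq hqτ
    set q' : ι → V × ℤ := q + Pi.single i s with hq'
    have hupd : ∀ j, q' j = if j = i then q i + s else q j := fun j => by
      by_cases hj : j = i
      · subst hj; simp [q']
      · simp [q', hj]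
    refine ⟨q', fun j => ?_, fun j => ?_, ?_⟩
    · rw [hupd]
      split_ifs
      exacts [hi, hq j]
    · rw [hupd]
      split_ifs with hj
      · subst hj
        exact affLe_trans (hpq j) (affLe_self_add (hq j).fst_mem (mem_Φ₀_of_mem hs.fst_mem)
          hi.fst_mem hs.zero_affLe)
      · exact hpq j
    · rw [hq']
      simp only [Pi.add_apply]
      rw [Finset.sum_add_distrib, Fintype.sum_pi_single', hqsum]
      abel

end BasedRootSystem

theorem stmt6_general {V : Type*} [NormedAddCommGroup V] [InnerProductSpace ℝ V]
    (B : BasedRootSystem V) (t : ℕ) (a : Fin t → V) (c : Fin t → ℤ)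
    (ha : ∀ i, a i ∈ B.Φ) (hc : ∀ i, 0 ≤ c i)
    (α : V) (hα : α ∈ B.Φ) (cc : ℤ)
    (hsum1 : ∑ i, a i = α)
    (hsum2 : ∑ i, (c i + B.eps (a i)) = cc + B.eps α)
    (β : V) (hβ : β ∈ (B.Φ : Set V) ∪ {0}) (c' : ℤ)
    (h1 : B.affLe (α, cc + B.eps α) (β, c' + B.eps β))
    (h2 : B.affLe (β, c' + B.eps β) (0, cc + 1)) :
    ∃ (b : Fin t → V) (d : Fin t → ℤ),
      (∀ i, b i ∈ (B.Φ : Set V) ∪ {0}) ∧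
      (∀ i, b i ∈ B.Φ → 0 ≤ d i) ∧
      (∀ i, b i = 0 → 1 ≤ d i + B.eps (b i)) ∧
      (∑ i, b i = β) ∧
      (∑ i, (d i + B.eps (b i)) = c' + B.eps β) ∧
      ∀ i, B.affLe (a i, c i + B.eps (a i)) (b i, d i + B.eps (b i)) ∧
           B.affLe (b i, d i + B.eps (b i)) (0, c i + 1) := by
  open BasedRootSystem in
  have hle : B.affLe (α, B.eps α) (β, c' + B.eps β - cc) :=
    (affLe_add_snd_iff cc).1 (by rwa [add_sub_cancel])
  have htop : B.IsRigid (β, c' + B.eps β - cc) :=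
    (isRigid_root hα).of_affLe hβ hle ((affLe_add_snd_iff cc).1 (by rwa [add_sub_cancel]))
  obtain ⟨q, hq, hpq, hqsum⟩ := exists_lift_of_reflTransGen
    (reflTransGen_rigidStep (isRigid_root hα) htop hle) (p := fun i => (a i, B.eps (a i)))
    (fun i => isRigid_root (ha i)) hsum1
  have hq₁ : ∑ i, (q i).1 = β := by
    simpa [Prod.fst_sum, hsum1] using congrArg Prod.fst hqsum
  have hq₂ : ∑ i, (q i).2 = ∑ i, B.eps (a i) + (c' + B.eps β - cc - B.eps α) := by
    simpa [Prod.snd_sum] using congrArg Prod.snd hqsum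
  refine ⟨fun i => (q i).1, fun i => c i + (q i).2 - B.eps (q i).1, fun i => (hq i).fst_mem,
    fun i hi => ?_, fun i hi => ?_, hq₁, ?_, fun i => ⟨?_, ?_⟩⟩
  · linarith [(hq i).snd_eq_eps hi, hc i]
  · linarith [(hq i).snd_eq_one hi, hc i]
  · rw [Finset.sum_add_distrib] at hsum2
    simp only [sub_add_cancel, Finset.sum_add_distrib, hq₂]
    linarith
  · simpa only [sub_add_cancel] using (affLe_add_snd_iff (c i)).2 (hpq i)
  · simpa only [sub_add_cancel] using (affLe_add_snd_iff (c i)).2 (hq i).affLe_delta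

/-- if positive affine roots `(α_i, c_i + ε_{α_i})` sum to the
positive affine root `(α, c + ε_α)`, and `(β, c' + ε_β)` (with `β ∈ Φ ∪ {0}`,
`c' ∈ {c, c+1}`) satisfies `(α, c+ε_α) ≤ (β, c'+ε_β) ≤ (0, c+1)`, then the
`(α_i, c_i + ε_{α_i})` can be enlarged, entry by entry, to extended positive
affine roots `(β_i, c'_i + ε_{β_i})` summing to `(β, c'+ε_β)` with
`(α_i, c_i+ε_{α_i}) ≤ (β_i, c'_i+ε_{β_i}) ≤ (0, c_i + 1)` for every `i`. -/
theorem stmt6 {V : Type*} [NormedAddCommGroup V] [InnerProductSpace ℝ V]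
    (B : BasedRootSystem V) (t : ℕ) (a : Fin t → V) (c : Fin t → ℤ)
    (ha : ∀ i, a i ∈ B.Φ) (hc : ∀ i, 0 ≤ c i)
    (α : V) (hα : α ∈ B.Φ) (cc : ℤ) (hcc : 0 ≤ cc)
    (hsum1 : ∑ i, a i = α)
    (hsum2 : ∑ i, (c i + B.eps (a i)) = cc + B.eps α)
    (β : V) (hβ : β ∈ (B.Φ : Set V) ∪ {0}) (c' : ℤ) (hc' : c' = cc ∨ c' = cc + 1)
    (h1 : B.affLe (α, cc + B.eps α) (β, c' + B.eps β))
    (h2 : B.affLe (β, c' + B.eps β) (0, cc + 1)) :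
    ∃ (b : Fin t → V) (d : Fin t → ℤ),
      (∀ i, b i ∈ (B.Φ : Set V) ∪ {0}) ∧
      (∀ i, b i ∈ B.Φ → 0 ≤ d i) ∧
      (∀ i, b i = 0 → 1 ≤ d i + B.eps (b i)) ∧
      (∑ i, b i = β) ∧
      (∑ i, (d i + B.eps (b i)) = c' + B.eps β) ∧
      ∀ i, B.affLe (a i, c i + B.eps (a i)) (b i, d i + B.eps (b i)) ∧
           B.affLe (b i, d i + B.eps (b i)) (0, c i + 1) :=
  stmt6_general B t a c ha hc α hα cc hsum1 hsum2 β hβ c' h1 h2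
end

section
/- Let F be a complete discretely valued field of residue characteristic 2 that is absolutely unramified (i.e., 2 is a uniformizer), with perfect residue field, and let O be its ring of integers. Then O is generated as a ring by the squares it contains. In particular, every element z of 1 + 𝔭 (𝔭 the maximal ideal) satisfies z = ((z+1)/2)² − ((z−1)/2)², with both (z+1)/2 and (z−1)/2 in O. -/
/-!
A unit `x` of `O` is congruent modulo `𝔭` to a square `c²`, because squaring is surjective on the
perfect residue field; since `𝔭 = (2)`, this gives `x = c² + 2d`, and
then `x = (c + d/c)² - (d/c)²`. In a local ring either `x` or `1 - x` is a unit, so every element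
is a signed sum of at most three squares.
-/

open IsLocalRing

theorem exists_eq_sq_sub_sq_of_sub_sq_mem_span_two {R : Type*} [CommRing R] {x c : R}
    (hc : IsUnit c) (h : x - c ^ 2 ∈ Ideal.span {2}) : ∃ a b : R, x = a ^ 2 - b ^ 2 := by
  obtain ⟨d, hd⟩ := Ideal.mem_span_singleton'.mp h
  obtain ⟨u, rfl⟩ := hc
  exact ⟨u + d * ↑u⁻¹, d * ↑u⁻¹, by linear_combination -hd - 2 * d * u.mul_inv⟩

theorem IsLocalRing.exists_isUnit_sub_sq_mem_maximalIdeal {R : Type*} [CommRing R]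
    [IsLocalRing R] [PerfectRing (ResidueField R) 2] {x : R} (hx : IsUnit x) :
    ∃ c : R, IsUnit c ∧ x - c ^ 2 ∈ maximalIdeal R := by
  obtain ⟨s, hs⟩ := (PerfectRing.bijective_frobenius (p := 2)).surjective (residue R x)
  obtain ⟨c, rfl⟩ := residue_surjective s
  have hc : residue R (c ^ 2) = residue R x := by rw [map_pow]; exact hs
  refine ⟨c, ?_, by rw [← residue_eq_zero_iff, map_sub, hc, sub_self]⟩
  rw [← residue_ne_zero_iff_isUnit, ← pow_ne_zero_iff two_ne_zero, ← map_pow, hc,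
    residue_ne_zero_iff_isUnit]
  exact hx

theorem IsLocalRing.exists_eq_sq_sub_sq_of_isUnit {R : Type*} [CommRing R] [IsLocalRing R]
    [PerfectRing (ResidueField R) 2] (hmax : maximalIdeal R = Ideal.span {2}) {x : R}
    (hx : IsUnit x) : ∃ a b : R, x = a ^ 2 - b ^ 2 := by
  obtain ⟨c, hc, hxc⟩ := exists_isUnit_sub_sq_mem_maximalIdeal hx
  exact exists_eq_sq_sub_sq_of_sub_sq_mem_span_two hc (hmax ▸ hxc)

theorem IsLocalRing.closure_squares_eq_top {R : Type*} [CommRing R] [IsLocalRing R]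
    (h : ∀ x : R, IsUnit x → ∃ a b : R, x = a ^ 2 - b ^ 2) :
    Subring.closure {x : R | ∃ y : R, x = y ^ 2} = ⊤ := by
  have hsq : ∀ y : R, y ^ 2 ∈ Subring.closure {x : R | ∃ y : R, x = y ^ 2} :=
    fun y => Subring.subset_closure ⟨y, rfl⟩
  refine eq_top_iff.mpr fun x _ => ?_
  rcases isUnit_or_isUnit_one_sub_self x with hx | hx
  · obtain ⟨a, b, rfl⟩ := h x hx
    exact sub_mem (hsq a) (hsq b)
  · obtain ⟨a, b, hab⟩ := h (1 - x) hx
    rw [show x = 1 ^ 2 - (a ^ 2 - b ^ 2) by rw [← hab]; ring]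
    exact sub_mem (hsq 1) (sub_mem (hsq a) (hsq b))

theorem exists_half_sq_sub_sq_of_sub_one_mem_span_two {R : Type*} [CommRing R] {z : R}
    (hz : z - 1 ∈ Ideal.span {2}) :
    ∃ a b : R, 2 * a = z + 1 ∧ 2 * b = z - 1 ∧ z = a ^ 2 - b ^ 2 := by
  obtain ⟨b, hb⟩ := Ideal.mem_span_singleton.mp hz
  exact ⟨b + 1, b, by linear_combination -hb, hb.symm, by linear_combination hb⟩

theorem stmt8_general (O : Type*) [CommRing O] [IsDomain O] [IsDiscreteValuationRing O]
    [PerfectRing (IsLocalRing.ResidueField O) 2]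
    (hunif : Irreducible (2 : O)) :
    Subring.closure {x : O | ∃ y : O, x = y ^ 2} = ⊤ ∧
    ∀ z : O, z - 1 ∈ IsLocalRing.maximalIdeal O →
      ∃ a b : O, 2 * a = z + 1 ∧ 2 * b = z - 1 ∧ z = a ^ 2 - b ^ 2 := by
  have hmax : maximalIdeal O = Ideal.span {2} :=
    (IsDiscreteValuationRing.irreducible_iff_uniformizer 2).mp hunif
  exact ⟨closure_squares_eq_top fun _ => exists_eq_sq_sub_sq_of_isUnit hmax,
    fun _ hz => exists_half_sq_sub_sq_of_sub_one_mem_span_two (hmax ▸ hz)⟩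

/-- let `O` be the ring of integers of a complete discretely valued
field of residue characteristic 2 which is absolutely unramified (i.e. `2` is a
uniformizer), with perfect residue field. Then `O` is generated as a ring by its
squares; in particular every `z ∈ 1 + 𝔭` satisfies
`z = ((z+1)/2)^2 - ((z-1)/2)^2` with `(z±1)/2 ∈ O`. -/
theorem stmt8 (O : Type*) [CommRing O] [IsDomain O] [IsDiscreteValuationRing O]
    [IsAdicComplete (IsLocalRing.maximalIdeal O) O]
    [CharP (IsLocalRing.ResidueField O) 2]
    [PerfectRing (IsLocalRing.ResidueField O) 2]
    (hunif : Irreducible (2 : O)) :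
    Subring.closure {x : O | ∃ y : O, x = y ^ 2} = ⊤ ∧
    ∀ z : O, z - 1 ∈ IsLocalRing.maximalIdeal O →
      ∃ a b : O, 2 * a = z + 1 ∧ 2 * b = z - 1 ∧ z = a ^ 2 - b ^ 2 :=
  stmt8_general O hunif
end

section
/- Let Φ be a root system, and for α ∈ Φ and positive integers v ≤ c define the function f_{α,c,v} : Φ → ℤ by f_{α,c,v}(α) = v, f_{α,c,v}(2α) = v if 2α ∈ Φ, and f_{α,c,v}(β) = c for all other β ∈ Φ. Then f_{α,c,v} is a concave function, i.e., f_{α,c,v}(β+γ) ≤ f_{α,c,v}(β) + f_{α,c,v}(γ) whenever β, γ, β+γ ∈ Φ, and f_{α,c,v}(β) + f_{α,c,v}(−β) ≥ 0 for all β ∈ Φ. -/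
open Finset

/-- A (possibly non-reduced) root system in a Euclidean space. -/
structure RootSystemE (V : Type*) [NormedAddCommGroup V] [InnerProductSpace ℝ V] where
  Φ : Finset V
  zero_not_mem : (0 : V) ∉ Φ
  neg_mem : ∀ α ∈ Φ, -α ∈ Φ
  crystallographic : ∀ α ∈ Φ, ∀ β ∈ Φ, ∃ n : ℤ,
    2 * (inner ℝ α β : ℝ) / (inner ℝ α α : ℝ) = (n : ℝ)
  reflect_mem : ∀ α ∈ Φ, ∀ β ∈ Φ, β - (2 * (inner ℝ β α : ℝ) / (inner ℝ α α : ℝ)) • α ∈ Φ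

/-!
The values of `f` lie in `[v, c]` with `v > 0`, so `f (β + γ) ≤ f β + f γ` can only fail when
`f β = f γ = v < c = f (β + γ)`, i.e. when `β, γ ∈ {α, 2α}` but `β + γ ≠ 2α`. Then `β + γ` is
`3α` or `4α`, and neither is a root: `2⟨nα, α⟩ / ⟨nα, nα⟩ = 2 / n` must be an integer.
-/

namespace RootSystemE

variable {V : Type*} [NormedAddCommGroup V] [InnerProductSpace ℝ V] (R : RootSystemE V)

lemma ne_zero_of_mem {β : V} (hβ : β ∈ R.Φ) : β ≠ 0 :=
  fun h => R.zero_not_mem (h ▸ hβ)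

lemma dvd_two_of_nsmul_mem {α : V} (hα : α ∈ R.Φ) {n : ℕ} (hn : n • α ∈ R.Φ) : n ∣ 2 := by
  obtain ⟨m, hm⟩ := R.crystallographic _ hn _ hα
  have hn0 : (n : ℝ) ≠ 0 := by
    rintro h
    rw [Nat.cast_eq_zero.mp h, zero_smul] at hn
    exact R.zero_not_mem hn
  have hαα : inner ℝ α α ≠ (0 : ℝ) := inner_self_ne_zero.mpr (R.ne_zero_of_mem hα)
  rw [← Nat.cast_smul_eq_nsmul ℝ, real_inner_smul_left, real_inner_smul_left,
    real_inner_smul_right] at hm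
  have h2 : (2 : ℝ) = m * n := by
    field_simp at hm
    linear_combination hm
  exact Int.natCast_dvd_natCast.mp ⟨m, by rw [mul_comm]; exact_mod_cast h2⟩

lemma add_eq_double_of_mem {α β γ : V} (hα : α ∈ R.Φ) (hβ : β = α ∨ β = α + α)
    (hγ : γ = α ∨ γ = α + α) (hβγ : β + γ ∈ R.Φ) : β + γ = α + α := by
  have h3 : α + α + α ∉ R.Φ := fun h =>
    absurd (R.dvd_two_of_nsmul_mem hα (n := 3) (by rwa [succ_nsmul, two_nsmul])) (by decide)
  have h4 : α + α + (α + α) ∉ R.Φ := fun h =>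
    absurd (R.dvd_two_of_nsmul_mem hα (n := 4) (by rwa [show 4 = 2 + 2 from rfl, add_nsmul,
      two_nsmul])) (by decide)
  rcases hβ with rfl | rfl <;> rcases hγ with rfl | rfl
  · rfl
  · exact absurd (add_assoc β β β ▸ hβγ) h3
  · exact absurd hβγ h3
  · exact absurd hβγ h4

end RootSystemE

open scoped Classical in
/-- the function `f_{α,c,v}` with `f(α) = v`, `f(2α) = v` (when `2α`
is a root) and `f(β) = c` for all other roots is a concave function. -/
theorem stmt9 {V : Type*} [NormedAddCommGroup V] [InnerProductSpace ℝ V]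
    (R : RootSystemE V) (α : V) (hα : α ∈ R.Φ)
    (v c : ℤ) (hv : 0 < v) (hvc : v ≤ c)
    (f : V → ℤ) (hf : ∀ β : V, f β = if β = α ∨ β = α + α then v else c) :
    (∀ β ∈ R.Φ, ∀ γ ∈ R.Φ, β + γ ∈ R.Φ → f (β + γ) ≤ f β + f γ) ∧
    (∀ β ∈ R.Φ, 0 ≤ f β + f (-β)) := by
  have hf_ge : ∀ β, v ≤ f β := fun β => by rw [hf]; split_ifs <;> omega
  have hf_le : ∀ β, f β ≤ c := fun β => by rw [hf]; split_ifs <;> omega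
  refine ⟨fun β _ γ _ hβγ => ?_, fun β _ => by linarith [hf_ge β, hf_ge (-β)]⟩
  by_cases hβ : β = α ∨ β = α + α
  · by_cases hγ : γ = α ∨ γ = α + α
    · rw [hf (β + γ), if_pos (Or.inr (R.add_eq_double_of_mem hα hβ hγ hβγ))]
      linarith [hf_ge β, hf_ge γ]
    · rw [hf γ, if_neg hγ]
      linarith [hf_ge β, hf_le (β + γ)]
  · rw [hf β, if_neg hβ]
    linarith [hf_ge γ, hf_le (β + γ)]
end
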